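/- arXiv:1805.03789 — 4 statements merged into one kernel-verified Lean document; each statement's English description precedes it below -/
import Mathlib

section
/- Product rule for evaluation of skew polynomials: let σ be a field automorphism of F_{q^m}, U, V ∈ F_{q^m}[x;σ], and a ∈ F_{q^m}. Let c = V(a) (the remainder evaluation, where F(a) is defined by F = G(x−a) + F(a)). If c = 0 then (UV)(a) = 0; if c ≠ 0 then (UV)(a) = U(σ(c) c^{−1} a) · V(a). -/
open Finset

/-- The `i`-th truncated norm `N_i(a) = σ^{i−1}(a)⋯σ(a)·a`. -/
def skewNorm {K : Type*} [Field K] (σ : K ≃+* K) (i : ℕ) (a : K) : K :=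
  ∏ j ∈ Finset.range i, (σ ^ j) a

/-- Evaluation of a skew polynomial `F ∈ K[x;σ]` (encoded by its coefficients
`F : ℕ →₀ K`) at `a`: the remainder of right division of `F` by `x − a`, given by
the closed formula `F(a) = Σᵢ Fᵢ · N_i(a)`. -/
noncomputable def skewEval {K : Type*} [Field K] (σ : K ≃+* K) (F : ℕ →₀ K) (a : K) : K :=
  F.sum fun i c => c * skewNorm σ i a

/-- Multiplication in the skew polynomial ring `K[x;σ]`, where `x·a = σ(a)·x`. -/
noncomputable def skewMul {K : Type*} [Field K] (σ : K ≃+* K) (U V : ℕ →₀ K) : ℕ →₀ K :=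
  U.sum fun i a => V.sum fun j b => Finsupp.single (i + j) (a * (σ ^ i) b)

/-! Writing `V = Σⱼ Vⱼ xʲ`, the multiplicativity `N_{i+j}(a) = σⁱ(N_j(a)) N_i(a)` of the truncated
norms gives `(UV)(a) = Σᵢ Uᵢ σⁱ(V(a)) N_i(a)`. This vanishes when `V(a) = 0`; otherwise
`σⁱ(c) N_i(a) = N_i(σ(c)c⁻¹a) c` for `c = V(a)`, since `N_i(σ(c)c⁻¹)` telescopes to `σⁱ(c)c⁻¹`. -/

section SkewEval

variable {K : Type*} [Field K] (σ : K ≃+* K)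

lemma skewNorm_add (i j : ℕ) (a : K) :
    skewNorm σ (i + j) a = (σ ^ i) (skewNorm σ j a) * skewNorm σ i a := by
  rw [skewNorm, prod_range_add, skewNorm, skewNorm, map_prod, mul_comm]
  simp only [pow_add, RingAut.mul_apply]

lemma skewNorm_mul (i : ℕ) (a b : K) :
    skewNorm σ i (a * b) = skewNorm σ i a * skewNorm σ i b := by
  simp only [skewNorm, map_mul, prod_mul_distrib]

lemma skewNorm_coboundary (i : ℕ) {c : K} (hc : c ≠ 0) :
    skewNorm σ i (σ c * c⁻¹) = (σ ^ i) c * c⁻¹ := by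
  induction i with
  | zero => simp [skewNorm, hc]
  | succ n ih =>
    have hσc : (σ ^ n) c ≠ 0 := (map_ne_zero _).mpr hc
    rw [skewNorm, prod_range_succ, ← skewNorm, ih, map_mul, map_inv₀, pow_succ,
      RingAut.mul_apply]
    field_simp

lemma skewNorm_conj (i : ℕ) (a : K) {c : K} (hc : c ≠ 0) :
    skewNorm σ i (σ c * c⁻¹ * a) * c = (σ ^ i) c * skewNorm σ i a := by
  rw [skewNorm_mul, skewNorm_coboundary σ i hc]
  field_simp

lemma skewEval_skewMul (U V : ℕ →₀ K) (a : K) :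
    skewEval σ (skewMul σ U V) a =
      U.sum fun i u => u * (σ ^ i) (skewEval σ V a) * skewNorm σ i a := by
  unfold skewEval skewMul
  rw [Finsupp.sum_sum_index (by simp) (by intros; ring)]
  refine Finsupp.sum_congr fun i _ => ?_
  rw [Finsupp.sum_sum_index (by simp) (by intros; ring), map_finsuppSum, Finsupp.mul_sum,
    Finsupp.sum_mul]
  refine Finsupp.sum_congr fun j _ => ?_
  rw [Finsupp.sum_single_index (by simp), skewNorm_add, map_mul]
  ring

end SkewEval

/-- Product rule for skew polynomial evaluation: if `c = V(a) = 0` then `(UV)(a) = 0`,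
and if `c ≠ 0` then `(UV)(a) = U(σ(c)c⁻¹a) · V(a)`. -/
theorem skewEval_mul {K : Type*} [Field K] (σ : K ≃+* K) (U V : ℕ →₀ K) (a : K) :
    (skewEval σ V a = 0 → skewEval σ (skewMul σ U V) a = 0) ∧
    (skewEval σ V a ≠ 0 → skewEval σ (skewMul σ U V) a =
      skewEval σ U (σ (skewEval σ V a) * (skewEval σ V a)⁻¹ * a) * skewEval σ V a) := by
  refine ⟨fun h => ?_, fun h => ?_⟩
  · simp [skewEval_skewMul, h]
  · rw [skewEval_skewMul, skewEval.eq_1 σ U, Finsupp.sum_mul]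
    refine Finsupp.sum_congr fun i _ => ?_
    rw [mul_assoc, mul_assoc, skewNorm_conj σ i a h]
end

section
/- Let γ be a primitive element of F_{q^m} and σ(a) = a^{q^r} with gcd(r,m) = 1. Then for all c ∈ F_{q^m}^* and all 0 ≤ i < j ≤ q−2, γ^j ≠ σ(c)c^{−1}γ^i; that is, γ^0, γ^1, ..., γ^{q−2} lie in pairwise distinct conjugacy classes under the relation b ~ a iff b = σ(c)c^{−1}a for some c ≠ 0. -/
/-! `σ(c)c⁻¹ = c^(q^r - 1)` is a `(q - 1)`-th power because `q - 1 ∣ q^r - 1`. So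
`γ^j = σ(c)c⁻¹γ^i` would make `γ^(j - i)` a `(q - 1)`-th power in the cyclic group generated
by `γ`, whose order `q^m - 1` is divisible by `q - 1`; this forces `q - 1 ∣ j - i`, which is
impossible for `0 < j - i < q - 1`. -/

theorem dvd_of_pow_eq_pow_of_dvd_orderOf {M : Type*} [Monoid M] {g x : M} {a d : ℕ}
    (hpos : 0 < orderOf g) (hd : d ∣ orderOf g) (hx : x ^ orderOf g = 1)
    (h : g ^ a = x ^ d) : d ∣ a := by
  obtain ⟨e, he⟩ := hd
  have he0 : 0 < e := Nat.pos_of_mul_pos_left (he ▸ hpos)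
  have hdvd : orderOf g ∣ a * e :=
    orderOf_dvd_of_pow_eq_one (by rw [pow_mul, h, ← pow_mul, ← he, hx])
  rw [he] at hdvd
  exact (Nat.mul_dvd_mul_iff_right he0).mp hdvd

theorem pow_pow_mul_inv_eq_pow_pow_sub_one {G₀ : Type*} [GroupWithZero G₀] {c : G₀} (hc : c ≠ 0)
    {q : ℕ} (hq : 0 < q) (r : ℕ) :
    c ^ q ^ r * c⁻¹ = (c ^ ((q ^ r - 1) / (q - 1))) ^ (q - 1) := by
  have hdvd : q - 1 ∣ q ^ r - 1 := by simpa using Nat.sub_dvd_pow_sub_pow q 1 r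
  rw [← pow_mul, Nat.div_mul_cancel hdvd, pow_sub₀ c hc (Nat.one_le_pow r q hq), pow_one]

theorem primitive_powers_distinct_conjugacy_classes_general
    {K : Type*} [Field K] [Fintype K] (q m r : ℕ)
    (hcard : Fintype.card K = q ^ m)
    (γ : K) (hγ : orderOf γ = q ^ m - 1) :
    ∀ c : K, c ≠ 0 → ∀ i j : ℕ, i < j → j ≤ q - 2 →
      γ ^ j ≠ c ^ q ^ r * c⁻¹ * γ ^ i := by
  intro c hc i j hij hj h
  have hpos : 0 < orderOf γ := by
    have := Fintype.one_lt_card (α := K)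
    omega
  have hγ0 : γ ≠ 0 := by
    rintro rfl
    simp at hpos
  have hpow : γ ^ (j - i) = (c ^ ((q ^ r - 1) / (q - 1))) ^ (q - 1) := by
    rw [pow_sub₀ γ hγ0 hij.le, h, ← pow_pow_mul_inv_eq_pow_pow_sub_one hc (by omega) r,
      mul_inv_cancel_right₀ (pow_ne_zero i hγ0)]
  have hdvd : q - 1 ∣ orderOf γ := by
    simpa [hγ] using Nat.sub_dvd_pow_sub_pow q 1 m
  have hx : (c ^ ((q ^ r - 1) / (q - 1))) ^ orderOf γ = 1 := by
    rw [← pow_mul, mul_comm, pow_mul, hγ, ← hcard, FiniteField.pow_card_sub_one_eq_one c hc,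
      one_pow]
  have := Nat.le_of_dvd (by omega) (dvd_of_pow_eq_pow_of_dvd_orderOf hpos hdvd hx hpow)
  omega

/-- Let `K = F_{q^m}` with `q = p^k` a prime power, `γ` a primitive element of `K`,
and `σ(a) = a^{q^r}` with `gcd(r,m) = 1`. Then for all `c ≠ 0` and `0 ≤ i < j ≤ q−2`,
`γ^j ≠ σ(c)·c⁻¹·γ^i`; i.e. `γ⁰, γ¹, …, γ^{q−2}` lie in pairwise distinct conjugacy
classes for the relation `b ∼ a ↔ ∃ c ≠ 0, b = σ(c)c⁻¹a`. -/
theorem primitive_powers_distinct_conjugacy_classes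
    {K : Type*} [Field K] [Fintype K] (p k q m r : ℕ)
    (hp : p.Prime) (hk : 1 ≤ k) (hq : q = p ^ k) (hm : 1 ≤ m)
    (hr1 : 1 ≤ r) (hrm : r ≤ m) (hgcd : Nat.gcd r m = 1)
    (hcard : Fintype.card K = q ^ m)
    (γ : K) (hγ : orderOf γ = q ^ m - 1) :
    ∀ c : K, c ≠ 0 → ∀ i j : ℕ, i < j → j ≤ q - 2 →
      γ ^ j ≠ c ^ q ^ r * c⁻¹ * γ ^ i :=
  primitive_powers_distinct_conjugacy_classes_general q m r hcard γ hγ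
end

section
/- For a P-closed set Ω ⊆ F_{q^m} with rank n (degree of its minimal skew polynomial), and any P-basis B of Ω, the evaluation map E_B : F_{q^m}[x;σ]_n → F_{q^m}^B, restricting skew polynomials of degree < n to their evaluations on B, is a vector space isomorphism over F_{q^m}. -/
open Finset

/-- Degree of a skew polynomial encoded as `ℕ →₀ K` (with `deg 0 = 0` by convention). -/
def skewDeg {K : Type*} [Field K] (F : ℕ →₀ K) : ℕ := F.support.sup id

/-- `F` is the (monic) minimal skew polynomial of the set `Ω`: it is nonzero, monic,
vanishes on `Ω`, and has minimal degree among nonzero skew polynomials vanishing on `Ω`. -/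
def IsMinSkewPoly {K : Type*} [Field K] (σ : K ≃+* K) (Ω : Set K) (F : ℕ →₀ K) : Prop :=
  F ≠ 0 ∧ F (skewDeg F) = 1 ∧ (∀ b ∈ Ω, skewEval σ F b = 0) ∧
    ∀ G : ℕ →₀ K, G ≠ 0 → (∀ b ∈ Ω, skewEval σ G b = 0) → skewDeg F ≤ skewDeg G

/-- `a` is P-independent from the set `T`: some skew polynomial vanishing on `T` does not
vanish at `a` (equivalently, `a` is not in the P-closure of `T`). -/
def PIndepFrom {K : Type*} [Field K] (σ : K ≃+* K) (a : K) (T : Set K) : Prop :=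
  ∃ F : ℕ →₀ K, (∀ b ∈ T, skewEval σ F b = 0) ∧ skewEval σ F a ≠ 0

/-- A set is P-independent if each of its elements is P-independent from the rest. -/
def PIndep {K : Type*} [Field K] (σ : K ≃+* K) (S : Set K) : Prop :=
  ∀ a ∈ S, PIndepFrom σ a (S \ {a})

/-!
A nonzero skew polynomial of degree `< n` vanishing on `B` would contradict the minimality
of `F_B`, whose degree is at least `n = deg F_Ω` because `F_B` vanishes on `Z(F_B) = Ω`.
Hence evaluation on `B` is injective on `K[x;σ]_n`, and it is an isomorphism since both sides
have dimension `n`.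
-/

section

variable {K : Type*} [Field K]

instance finiteDimensional_supported_finset {ι : Type*} (s : Finset ι) :
    FiniteDimensional K (Finsupp.supported K K (↑s : Set ι)) :=
  (Finsupp.supportedEquivFinsupp _).symm.finiteDimensional

theorem finrank_supported_finset {ι : Type*} (s : Finset ι) :
    Module.finrank K (Finsupp.supported K K (↑s : Set ι)) = s.card := by
  rw [(Finsupp.supportedEquivFinsupp _).finrank_eq, Module.finrank_finsupp_self]
  simp

theorem skewDeg_lt_of_mem_supported_range {n : ℕ} {F : ℕ →₀ K}
    (hF : F ∈ Finsupp.supported K K (↑(range n) : Set ℕ)) (hF0 : F ≠ 0) :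
    skewDeg F < n := by
  have hsupp : ∀ k ∈ F.support, k < n := fun k hk => by simpa using hF hk
  obtain ⟨k, hk⟩ := Finsupp.support_nonempty_iff.2 hF0
  exact (Finset.sup_lt_iff (hsupp k hk).pos).2 hsupp

theorem IsMinSkewPoly.eq_zero_of_skewDeg_lt {σ : K ≃+* K} {S : Set K} {F G : ℕ →₀ K}
    (hF : IsMinSkewPoly σ S F) (hG : ∀ b ∈ S, skewEval σ G b = 0)
    (hdeg : skewDeg G < skewDeg F) : G = 0 := by
  by_contra hG0
  exact (hF.2.2.2 G hG0 hG).not_gt hdeg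

variable (σ : K ≃+* K)

noncomputable def skewEvalLinearMap (a : K) : (ℕ →₀ K) →ₗ[K] K :=
  Finsupp.linearCombination K fun i => skewNorm σ i a

theorem skewEvalLinearMap_apply (a : K) (F : ℕ →₀ K) :
    skewEvalLinearMap σ a F = skewEval σ F a := by
  simp only [skewEvalLinearMap, Finsupp.linearCombination_apply, skewEval, smul_eq_mul]

noncomputable def skewEvalOn {n : ℕ} (B : Fin n → K) :
    Finsupp.supported K K (↑(range n) : Set ℕ) →ₗ[K] (Fin n → K) :=
  LinearMap.pi fun i => (skewEvalLinearMap σ (B i)).comp (Submodule.subtype _)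

theorem skewEvalOn_apply {n : ℕ} (B : Fin n → K)
    (F : Finsupp.supported K K (↑(range n) : Set ℕ)) (i : Fin n) :
    skewEvalOn σ B F i = skewEval σ (F : ℕ →₀ K) (B i) :=
  skewEvalLinearMap_apply σ (B i) F

variable {σ}

theorem skewEvalOn_injective {n : ℕ} {B : Fin n → K} {F : ℕ →₀ K}
    (hF : IsMinSkewPoly σ (Set.range B) F) (hn : n ≤ skewDeg F) :
    Function.Injective (skewEvalOn σ B) := by
  refine (injective_iff_map_eq_zero _).2 fun G hG => Subtype.ext ?_
  have hvanish : ∀ b ∈ Set.range B, skewEval σ (G : ℕ →₀ K) b = 0 := by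
    rintro _ ⟨i, rfl⟩
    rw [← skewEvalOn_apply, hG, Pi.zero_apply]
  by_contra hG0
  exact hG0 (hF.eq_zero_of_skewDeg_lt hvanish
    ((skewDeg_lt_of_mem_supported_range G.2 hG0).trans_le hn))

end

theorem skew_lagrange_interpolation_general {K : Type*} [Field K] (σ : K ≃+* K)
    (Ω : Set K) (FΩ : ℕ →₀ K) (hFΩ : IsMinSkewPoly σ Ω FΩ)
    (n : ℕ) (hn : skewDeg FΩ = n)
    (B : Fin n → K)
    (FB : ℕ →₀ K) (hFB : IsMinSkewPoly σ (Set.range B) FB)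
    (hBgen : {a | skewEval σ FB a = 0} = Ω) :
    ∃ e : ↥(Finsupp.supported K K (↑(Finset.range n) : Set ℕ)) ≃ₗ[K] (Fin n → K),
      ∀ F : ↥(Finsupp.supported K K (↑(Finset.range n) : Set ℕ)), ∀ i : Fin n,
        e F i = skewEval σ (↑F : ℕ →₀ K) (B i) := by
  have hFB_vanishes : ∀ b ∈ Ω, skewEval σ FB b = 0 := fun b hb => by rwa [← hBgen] at hb
  have hrank : n ≤ skewDeg FB := by
    rw [← hn]
    exact hFΩ.2.2.2 FB hFB.1 hFB_vanishes
  have hdim : Module.finrank K (Finsupp.supported K K (↑(range n) : Set ℕ)) =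
      Module.finrank K (Fin n → K) := by
    rw [finrank_supported_finset, card_range, Module.finrank_fin_fun]
  exact ⟨LinearMap.linearEquivOfInjective (V := Finsupp.supported K K (↑(range n) : Set ℕ))
    (V₂ := Fin n → K) (skewEvalOn σ B) (skewEvalOn_injective hFB hrank) hdim,
    skewEvalOn_apply σ B⟩

/-- Lagrange interpolation: for a P-closed set `Ω` of rank `n` (the degree of its minimal
skew polynomial `F_Ω`) and a P-basis `B = {b₁,…,b_n}` of `Ω`, the evaluation map from skew
polynomials of degree `< n` to `K^B`, `F ↦ (F(b₁),…,F(b_n))`, is a vector space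
isomorphism over `K = F_{q^m}`. -/
theorem skew_lagrange_interpolation {K : Type*} [Field K] [Fintype K] (σ : K ≃+* K)
    (Ω : Set K) (FΩ : ℕ →₀ K) (hFΩ : IsMinSkewPoly σ Ω FΩ)
    (hclosed : Ω = {a | skewEval σ FΩ a = 0}) (n : ℕ) (hn : skewDeg FΩ = n)
    (B : Fin n → K) (hBinj : Function.Injective B) (hBmem : ∀ i, B i ∈ Ω)
    (hBindep : PIndep σ (Set.range B))
    (FB : ℕ →₀ K) (hFB : IsMinSkewPoly σ (Set.range B) FB)
    (hBgen : {a | skewEval σ FB a = 0} = Ω) :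
    ∃ e : ↥(Finsupp.supported K K (↑(Finset.range n) : Set ℕ)) ≃ₗ[K] (Fin n → K),
      ∀ F : ↥(Finsupp.supported K K (↑(Finset.range n) : Set ℕ)), ∀ i : Fin n,
        e F i = skewEval σ (↑F : ℕ →₀ K) (B i) :=
  skew_lagrange_interpolation_general σ Ω FΩ hFΩ n hn B FB hFB hBgen
end

section
/- Lifting preserves distances: for c, d ∈ F_{q^m}^n (partitioned into ℓ blocks), the sum-subspace distance between their liftings equals twice their sum-rank distance: d_SS(I_Σ(c), I_Σ(d)) = 2·d_SR(c,d). Consequently, for any block code C ⊆ F_{q^m}^n, d_SS(I_Σ(C)) = 2·d_SR(C). -/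
/-! For a matrix `M` with `n` columns, the column space of `[M; 1]` is the graph `{(Mx, x)}`,
which has dimension `n`. Since `(Mx, x) = (Ny, y)` forces `x = y` and `(M - N) x = 0`, the
intersection of two such graphs is the image of `ker (M - N)`, of dimension `n - rk (M - N)`;
by Grassmann's formula their sum has dimension `n + rk (M - N)`, so the subspace distance of the
two graphs is `2 rk (M - N)`. Summing over the blocks gives twice the sum-rank distance, and as
doubling is monotone it commutes with taking the minimum over pairs of distinct codewords. -/

open Matrix Module

variable {Fq Fqm : Type*} [Field Fq] [Field Fqm] [Algebra Fq Fqm]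

/-- Matrix representation of a vector over `Fqm` with respect to an `Fq`-basis of `Fqm`. -/
noncomputable def matRep {m n : ℕ} (A : Basis (Fin m) Fq Fqm) (c : Fin n → Fqm) :
    Matrix (Fin m) (Fin n) Fq :=
  Matrix.of fun i j => A.repr (c j) i

/-- Sum-rank weight of a block vector `c = (c⁽¹⁾, …, c⁽ℓ⁾)` with block lengths `nn i`. -/
noncomputable def sumRankWt {m ℓ : ℕ} (A : Basis (Fin m) Fq Fqm) {nn : Fin ℓ → ℕ}
    (c : (i : Fin ℓ) → Fin (nn i) → Fqm) : ℕ :=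
  ∑ i, (matRep A (c i)).rank


/-- The `i`-th component of the lifting `I_Σ(c)`: the column space (over `Fq`) of the
`(m + nᵢ) × nᵢ` matrix obtained by stacking the matrix expansion of the `i`-th block of
`c` on top of the `nᵢ × nᵢ` identity matrix. -/
noncomputable def lifting {m ℓ : ℕ} (A : Basis (Fin m) Fq Fqm) {nn : Fin ℓ → ℕ}
    (c : (i : Fin ℓ) → Fin (nn i) → Fqm) (i : Fin ℓ) :
    Submodule Fq ((Fin m ⊕ Fin (nn i)) → Fq) :=
  Submodule.span Fq (Set.range fun j : Fin (nn i) => fun r =>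
    Matrix.fromRows (matRep A (c i)) (1 : Matrix (Fin (nn i)) (Fin (nn i)) Fq) r j)

namespace Matrix

variable {K m n : Type*} [Field K] [Fintype n] [DecidableEq n]

noncomputable def liftingSpace (M : Matrix m n K) : Submodule K (m ⊕ n → K) :=
  LinearMap.range (fromRows M (1 : Matrix n n K)).mulVecLin

instance (M : Matrix m n K) : FiniteDimensional K (liftingSpace M) :=
  LinearMap.finiteDimensional_range _

theorem fromRows_one_mulVec (M : Matrix m n K) (x : n → K) :
    fromRows M (1 : Matrix n n K) *ᵥ x = Sum.elim (M *ᵥ x) x := by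
  rw [fromRows_mulVec, one_mulVec]

theorem fromRows_one_mulVecLin_injective (M : Matrix m n K) :
    Function.Injective (fromRows M (1 : Matrix n n K)).mulVecLin := fun x y h => by
  simp only [mulVecLin_apply, fromRows_one_mulVec, Sum.elim_eq_iff] at h
  exact h.2

theorem finrank_liftingSpace (M : Matrix m n K) :
    finrank K (liftingSpace M) = Fintype.card n := by
  rw [liftingSpace, LinearMap.finrank_range_of_inj (fromRows_one_mulVecLin_injective M),
    finrank_fintype_fun_eq_card]

theorem liftingSpace_inf (M N : Matrix m n K) :
    liftingSpace M ⊓ liftingSpace N =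
      (LinearMap.ker (M - N).mulVecLin).map (fromRows M (1 : Matrix n n K)).mulVecLin := by
  ext v
  simp only [liftingSpace, Submodule.mem_inf, LinearMap.mem_range, Submodule.mem_map,
    LinearMap.mem_ker, mulVecLin_apply, fromRows_one_mulVec, sub_mulVec, sub_eq_zero]
  constructor
  · rintro ⟨⟨x, rfl⟩, ⟨y, h⟩⟩
    obtain ⟨hMN, rfl⟩ := Sum.elim_eq_iff.mp h
    exact ⟨y, hMN.symm, rfl⟩
  · rintro ⟨x, hMN, rfl⟩
    exact ⟨⟨x, rfl⟩, ⟨x, by rw [hMN]⟩⟩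

theorem finrank_liftingSpace_inf (M N : Matrix m n K) :
    finrank K ↥(liftingSpace M ⊓ liftingSpace N) = Fintype.card n - (M - N).rank := by
  rw [liftingSpace_inf,
    ← (Submodule.equivMapOfInjective _ (fromRows_one_mulVecLin_injective M) _).finrank_eq, rank]
  have rank_nullity := (M - N).mulVecLin.finrank_range_add_finrank_ker
  rw [finrank_fintype_fun_eq_card] at rank_nullity
  omega

theorem finrank_liftingSpace_sup (M N : Matrix m n K) :
    finrank K ↥(liftingSpace M ⊔ liftingSpace N) = Fintype.card n + (M - N).rank := by
  have grassmann := Submodule.finrank_sup_add_finrank_inf_eq (liftingSpace M) (liftingSpace N)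
  rw [finrank_liftingSpace_inf, finrank_liftingSpace, finrank_liftingSpace] at grassmann
  have := (M - N).rank_le_card_width
  omega

theorem finrank_liftingSpace_sup_sub_finrank_inf (M N : Matrix m n K) :
    finrank K ↥(liftingSpace M ⊔ liftingSpace N) - finrank K ↥(liftingSpace M ⊓ liftingSpace N) =
      2 * (M - N).rank := by
  rw [finrank_liftingSpace_sup, finrank_liftingSpace_inf]
  have := (M - N).rank_le_card_width
  omega

end Matrix

theorem Nat.sInf_image_of_monotone {f : ℕ → ℕ} (hf : Monotone f) (h0 : f 0 = 0) (s : Set ℕ) :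
    sInf (f '' s) = f (sInf s) := by
  rcases s.eq_empty_or_nonempty with rfl | hs
  · simp [h0]
  · exact (hf.map_csInf hs).symm

theorem matRep_sub {m n : ℕ} (A : Basis (Fin m) Fq Fqm) (c d : Fin n → Fqm) :
    matRep A (c - d) = matRep A c - matRep A d := by
  ext i j
  simp [matRep]

theorem lifting_eq_liftingSpace {m ℓ : ℕ} (A : Basis (Fin m) Fq Fqm) {nn : Fin ℓ → ℕ}
    (c : (i : Fin ℓ) → Fin (nn i) → Fqm) (i : Fin ℓ) :
    lifting A c i = (matRep A (c i)).liftingSpace := by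
  rw [liftingSpace, range_mulVecLin]
  rfl

theorem sum_finrank_lifting_sup_sub_finrank_inf {m ℓ : ℕ} (A : Basis (Fin m) Fq Fqm)
    {nn : Fin ℓ → ℕ} (c d : (i : Fin ℓ) → Fin (nn i) → Fqm) :
    ∑ i, (finrank Fq ↥(lifting A c i ⊔ lifting A d i) -
        finrank Fq ↥(lifting A c i ⊓ lifting A d i)) = 2 * sumRankWt A (c - d) := by
  rw [sumRankWt, Finset.mul_sum]
  refine Finset.sum_congr rfl fun i _ => ?_
  rw [lifting_eq_liftingSpace, lifting_eq_liftingSpace, finrank_liftingSpace_sup_sub_finrank_inf,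
    Pi.sub_apply, matRep_sub]

/-- Lifting preserves distances: the sum-subspace distance between the liftings of `c`
and `d` equals twice their sum-rank distance; consequently, for any block code `C`,
the minimum sum-subspace distance of the lifted code equals twice the minimum sum-rank
distance of `C`. -/
theorem lifting_distance {m ℓ : ℕ} (A : Basis (Fin m) Fq Fqm) {nn : Fin ℓ → ℕ} :
    (∀ c d : (i : Fin ℓ) → Fin (nn i) → Fqm,
      ∑ i, (Module.finrank Fq ↥(lifting A c i ⊔ lifting A d i) -
          Module.finrank Fq ↥(lifting A c i ⊓ lifting A d i)) =
        2 * sumRankWt A (c - d)) ∧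
    (∀ C : Set ((i : Fin ℓ) → Fin (nn i) → Fqm),
      sInf {w | ∃ c ∈ C, ∃ d ∈ C, c ≠ d ∧
          (∑ i, (Module.finrank Fq ↥(lifting A c i ⊔ lifting A d i) -
            Module.finrank Fq ↥(lifting A c i ⊓ lifting A d i))) = w} =
        2 * sInf {w | ∃ c ∈ C, ∃ d ∈ C, c ≠ d ∧ sumRankWt A (c - d) = w}) := by
  refine ⟨sum_finrank_lifting_sup_sub_finrank_inf A, fun C => ?_⟩
  simp only [sum_finrank_lifting_sup_sub_finrank_inf]
  rw [← Nat.sInf_image_of_monotone (fun _ _ h => Nat.mul_le_mul_left 2 h) rfl]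
  congr 1
  ext w
  constructor
  · rintro ⟨c, hc, d, hd, hne, rfl⟩
    exact ⟨_, ⟨c, hc, d, hd, hne, rfl⟩, rfl⟩
  · rintro ⟨_, ⟨c, hc, d, hd, hne, rfl⟩, rfl⟩
    exact ⟨c, hc, d, hd, hne, rfl⟩
end
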